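/- arXiv:1606.05011 — 2 statements merged into one kernel-verified Lean document; each statement's English description precedes it below -/
import Mathlib

section
/- Let n ≥ 1 and let w : ℝ → ℝ be a nonnegative Lebesgue integrable function vanishing on (−∞, 0) with ∫_0^∞ t^{2n−2} w(t) dt < ∞. Then the function x ↦ W_n(𝓛w; x) is completely monotone on (0, ∞). -/
open MeasureTheory

/-- The Laplace transform (𝓛f)(x) = ∫_0^∞ f(t) e^{−xt} dt. -/
noncomputable def laplaceT (f : ℝ → ℝ) : ℝ → ℝ :=
  fun x => ∫ t in Set.Ioi (0 : ℝ), f t * Real.exp (-(x * t))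
/-- The n-th Wronskian W_n(g;x) = det [g^{(i+j)}(x)]_{i,j=0}^{n-1} of a real-valued g. -/
noncomputable def wronskR (n : ℕ) (g : ℝ → ℝ) (x : ℝ) : ℝ :=
  Matrix.det (Matrix.of fun i j : Fin n => iteratedDeriv ((i : ℕ) + (j : ℕ)) g x)
/-- φ is completely monotone on (0,∞): infinitely differentiable there with
(−1)^k φ^{(k)}(x) ≥ 0 for all x > 0 and k ≥ 0. -/
def CompletelyMonotoneOn (φ : ℝ → ℝ) : Prop :=
  ContDiffOn ℝ (⊤ : ℕ∞) φ (Set.Ioi 0) ∧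
    ∀ (k : ℕ) (x : ℝ), 0 < x → 0 ≤ (-1 : ℝ) ^ k * iteratedDeriv k φ x

open Set Nat

lemma pow_mul_exp_neg_le {s c : ℝ} (hs : 0 ≤ s) (hc : 0 < c) (k : ℕ) :
    s ^ k * Real.exp (-(c * s)) ≤ (k ! : ℝ) / c ^ k := by
  have h1 : (c * s) ^ k / k ! ≤ Real.exp (c * s) := by
    refine le_trans ?_ (Real.sum_le_exp_of_nonneg (by positivity) (k + 1))
    exact Finset.single_le_sum (f := fun i => (c * s) ^ i / i !)
      (fun i _ => by positivity) (Finset.self_mem_range_succ k)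
  have hck : (0:ℝ) < c ^ k := pow_pos hc k
  have h1' : (c * s) ^ k ≤ Real.exp (c * s) * (k ! : ℝ) := by
    rw [div_le_iff₀ (by positivity : (0:ℝ) < (k ! : ℝ))] at h1; exact h1
  rw [le_div_iff₀ hck]
  have h4 : Real.exp (-(c * s)) * (c * s) ^ k
      ≤ Real.exp (-(c * s)) * (Real.exp (c * s) * (k ! : ℝ)) :=
    mul_le_mul_of_nonneg_left h1' (Real.exp_pos _).le
  calc s ^ k * Real.exp (-(c * s)) * c ^ k = Real.exp (-(c * s)) * (c * s) ^ k := by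
        rw [mul_pow]; ring
    _ ≤ Real.exp (-(c * s)) * (Real.exp (c * s) * (k ! : ℝ)) := h4
    _ = (k ! : ℝ) := by rw [← mul_assoc, ← Real.exp_add]; simp

section Kernel

variable {α : Type*} [MeasurableSpace α] {μ : Measure α} {g S : α → ℝ}
  (hg : Integrable g μ) (hS : Measurable S) (hsupp : ∀ a, g a ≠ 0 → 0 ≤ S a)

include hg hS hsupp in
lemma integrable_kernel (k : ℕ) {x : ℝ} (hx : 0 < x) :
    Integrable (fun a => g a * ((-S a) ^ k * Real.exp (-(x * S a)))) μ := by
  refine Integrable.mono' ((hg.abs.const_mul ((k ! : ℝ) / x ^ k))) ?_ ?_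
  · exact (hg.aestronglyMeasurable.aemeasurable.mul
      (((hS.neg.pow_const k).mul
        ((hS.const_mul x).neg.exp)).aemeasurable)).aestronglyMeasurable
  · refine Filter.Eventually.of_forall fun a => ?_
    by_cases hga : g a = 0
    · simp [hga]
    · have hSa : 0 ≤ S a := hsupp a hga
      have : ‖g a * ((-S a) ^ k * Real.exp (-(x * S a)))‖
          = |g a| * ((S a) ^ k * Real.exp (-(x * S a))) := by
        rw [norm_mul, norm_mul, Real.norm_eq_abs, Real.norm_eq_abs, Real.norm_eq_abs,
          abs_pow, abs_neg, abs_of_nonneg hSa, abs_of_pos (Real.exp_pos _)]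
      rw [this]
      show _ ≤ (k ! : ℝ) / x ^ k * |g a|
      rw [mul_comm ((k ! : ℝ) / x ^ k) |g a|]
      exact mul_le_mul_of_nonneg_left (pow_mul_exp_neg_le hSa hx k) (abs_nonneg _)

include hg hS hsupp in
lemma hasDerivAt_kernel (k : ℕ) {x : ℝ} (hx : 0 < x) :
    HasDerivAt (fun y => ∫ a, g a * ((-S a) ^ k * Real.exp (-(y * S a))) ∂μ)
      (∫ a, g a * ((-S a) ^ (k + 1) * Real.exp (-(x * S a))) ∂μ) x := by
  have hmeas : ∀ (m : ℕ) (y : ℝ), AEStronglyMeasurable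
      (fun a => g a * ((-S a) ^ m * Real.exp (-(y * S a)))) μ :=
    fun m y => (hg.aestronglyMeasurable.aemeasurable.mul
      (((hS.neg.pow_const m).mul
        ((hS.const_mul y).neg.exp)).aemeasurable)).aestronglyMeasurable
  have hhalf : 0 < x / 2 := by linarith
  have key := hasDerivAt_integral_of_dominated_loc_of_deriv_le (μ := μ)
    (F := fun y a => g a * ((-S a) ^ k * Real.exp (-(y * S a))))
    (F' := fun y a => g a * ((-S a) ^ (k + 1) * Real.exp (-(y * S a))))
    (x₀ := x) (s := Metric.ball x (x / 2))
    (bound := fun a => (((k+1)! : ℝ) / (x/2) ^ (k+1)) * |g a|)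
    (Metric.ball_mem_nhds x hhalf)
    (Filter.Eventually.of_forall fun y => hmeas k y)
    (integrable_kernel hg hS hsupp k hx)
    (hmeas (k+1) x)
    ?_ ((hg.abs.const_mul _)) ?_
  · exact key.2
  · refine Filter.Eventually.of_forall fun a => fun y hy => ?_
    by_cases hga : g a = 0
    · simp [hga]
    · have hSa : 0 ≤ S a := hsupp a hga
      have hyx : x / 2 ≤ y := by
        have := abs_lt.1 (by simpa [Real.dist_eq] using Metric.mem_ball.1 hy)
        linarith [this.1]
      have h1 : ‖g a * ((-S a) ^ (k+1) * Real.exp (-(y * S a)))‖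
          = |g a| * ((S a) ^ (k+1) * Real.exp (-(y * S a))) := by
        rw [norm_mul, norm_mul, Real.norm_eq_abs, Real.norm_eq_abs, Real.norm_eq_abs,
          abs_pow, abs_neg, abs_of_nonneg hSa, abs_of_pos (Real.exp_pos _)]
      rw [h1]
      show _ ≤ ((k+1)! : ℝ) / (x/2) ^ (k+1) * |g a|
      rw [mul_comm (((k+1)! : ℝ) / (x/2) ^ (k+1)) |g a|]
      refine mul_le_mul_of_nonneg_left ?_ (abs_nonneg _)
      calc (S a) ^ (k+1) * Real.exp (-(y * S a))
          ≤ (S a) ^ (k+1) * Real.exp (-((x/2) * S a)) := by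
            refine mul_le_mul_of_nonneg_left (Real.exp_le_exp.2 ?_) (by positivity)
            have := mul_le_mul_of_nonneg_right hyx hSa
            linarith
        _ ≤ ((k+1)! : ℝ) / (x/2) ^ (k+1) := pow_mul_exp_neg_le hSa hhalf (k+1)
  · refine Filter.Eventually.of_forall fun a => fun y hy => ?_
    have h1 : HasDerivAt (fun z : ℝ => -(z * S a)) (-(1 * S a)) y :=
      ((hasDerivAt_id y).mul_const (S a)).neg
    have h2 := h1.exp
    have h3 := h2.const_mul (g a * (-S a) ^ k)
    convert h3 using 1
    · rfl
    · funext z; ring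
    · show g a * ((-S a) ^ (k+1) * Real.exp (-(y * S a))) = _
      ring

include hg hS hsupp in
lemma iteratedDeriv_kernel (k : ℕ) {x : ℝ} (hx : 0 < x) :
    iteratedDeriv k (fun y => ∫ a, g a * Real.exp (-(y * S a)) ∂μ) x
      = ∫ a, g a * ((-S a) ^ k * Real.exp (-(x * S a))) ∂μ := by
  induction k generalizing x with
  | zero => simp
  | succ k ih =>
    rw [iteratedDeriv_succ]
    have hev : iteratedDeriv k (fun y => ∫ a, g a * Real.exp (-(y * S a)) ∂μ)
        =ᶠ[nhds x] fun y => ∫ a, g a * ((-S a) ^ k * Real.exp (-(y * S a))) ∂μ := by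
      filter_upwards [IsOpen.mem_nhds isOpen_Ioi hx] with y hy
      exact ih hy
    rw [hev.deriv_eq]
    exact (hasDerivAt_kernel hg hS hsupp k hx).deriv

include hg hS hsupp in
lemma contDiffOn_kernel :
    ContDiffOn ℝ (⊤ : ℕ∞) (fun y : ℝ => ∫ a, g a * Real.exp (-(y * S a)) ∂μ) (Set.Ioi 0) := by
  set Φ : ℂ → ℂ := fun z => ∫ a, (g a : ℂ) * Complex.exp (-(z * (S a : ℂ))) ∂μ with hΦ
  have hmeasC : ∀ z : ℂ, AEStronglyMeasurable
      (fun a => (g a : ℂ) * Complex.exp (-(z * (S a : ℂ)))) μ := by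
    intro z
    refine (((Complex.measurable_ofReal.comp_aemeasurable
      hg.aestronglyMeasurable.aemeasurable)).mul ?_).aestronglyMeasurable
    exact (Complex.measurable_exp.comp
      (((Complex.measurable_ofReal.comp hS).const_mul z).neg)).aemeasurable
  have hmeasC' : ∀ z : ℂ, AEStronglyMeasurable
      (fun a => (g a : ℂ) * (-(S a : ℂ) * Complex.exp (-(z * (S a : ℂ))))) μ := by
    intro z
    refine (((Complex.measurable_ofReal.comp_aemeasurable
      hg.aestronglyMeasurable.aemeasurable)).mul ?_).aestronglyMeasurable
    exact (((Complex.measurable_ofReal.comp hS).neg).mul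
      (Complex.measurable_exp.comp
        (((Complex.measurable_ofReal.comp hS).const_mul z).neg))).aemeasurable
  have hre : ∀ (z : ℂ) (a : α), (-(z * (S a : ℂ))).re = -(z.re * S a) := by
    intro z a
    simp [Complex.mul_re]
  have hnorm : ∀ (z : ℂ) (a : α), ‖Complex.exp (-(z * (S a : ℂ)))‖
      = Real.exp (-(z.re * S a)) := by
    intro z a
    rw [Complex.norm_exp, hre]
  have hintC : ∀ z : ℂ, 0 < z.re →
      Integrable (fun a => (g a : ℂ) * Complex.exp (-(z * (S a : ℂ)))) μ := by
    intro z hz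
    refine Integrable.mono' hg.abs (hmeasC z) (Filter.Eventually.of_forall fun a => ?_)
    by_cases hga : g a = 0
    · simp [hga]
    · have hSa := hsupp a hga
      rw [norm_mul, hnorm, Complex.norm_real]
      have : Real.exp (-(z.re * S a)) ≤ 1 := by
        rw [Real.exp_le_one_iff]
        nlinarith
      calc ‖g a‖ * Real.exp (-(z.re * S a)) ≤ ‖g a‖ * 1 :=
            mul_le_mul_of_nonneg_left this (norm_nonneg _)
        _ = |g a| := by rw [mul_one, Real.norm_eq_abs]
  have hderiv : ∀ z : ℂ, 0 < z.re → HasDerivAt Φ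
      (∫ a, (g a : ℂ) * (-(S a : ℂ) * Complex.exp (-(z * (S a : ℂ)))) ∂μ) z := by
    intro z hz
    have hhalf : 0 < z.re / 2 := by linarith
    have key := hasDerivAt_integral_of_dominated_loc_of_deriv_le (μ := μ)
      (F := fun (y : ℂ) a => (g a : ℂ) * Complex.exp (-(y * (S a : ℂ))))
      (F' := fun (y : ℂ) a => (g a : ℂ) * (-(S a : ℂ) * Complex.exp (-(y * (S a : ℂ)))))
      (x₀ := z) (s := Metric.ball z (z.re / 2))
      (bound := fun a => ((1 ! : ℝ) / (z.re / 2) ^ 1) * |g a|)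
      (Metric.ball_mem_nhds z hhalf)
      (Filter.Eventually.of_forall fun y => hmeasC y)
      (hintC z hz)
      (hmeasC' z)
      ?_ (hg.abs.const_mul _) ?_
    · exact key.2
    · refine Filter.Eventually.of_forall fun a => fun y hy => ?_
      by_cases hga : g a = 0
      · simp [hga]
      · have hSa := hsupp a hga
        have hyre : z.re / 2 ≤ y.re := by
          have h1 : |(y - z).re| ≤ ‖y - z‖ := Complex.abs_re_le_norm _
          have h2 : ‖y - z‖ < z.re / 2 := by
            rw [← Complex.dist_eq]; exact Metric.mem_ball.1 hy
          have := abs_lt.1 (lt_of_le_of_lt h1 h2)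
          have h3 := this.1
          rw [Complex.sub_re] at h3
          linarith
        rw [norm_mul, norm_mul, hnorm, Complex.norm_real, norm_neg, Complex.norm_real]
        show |g a| * (‖S a‖ * Real.exp (-(y.re * S a))) ≤ (1 ! : ℝ) / (z.re/2) ^ 1 * |g a|
        rw [mul_comm ((1 ! : ℝ) / (z.re/2) ^ 1) |g a|, Real.norm_eq_abs,
          abs_of_nonneg hSa]
        refine mul_le_mul_of_nonneg_left ?_ (abs_nonneg _)
        calc S a * Real.exp (-(y.re * S a)) ≤ S a * Real.exp (-((z.re/2) * S a)) := by
              refine mul_le_mul_of_nonneg_left (Real.exp_le_exp.2 ?_) hSa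
              nlinarith
          _ = (S a) ^ 1 * Real.exp (-((z.re/2) * S a)) := by ring
          _ ≤ (1 ! : ℝ) / (z.re/2) ^ 1 := pow_mul_exp_neg_le hSa hhalf 1
    · refine Filter.Eventually.of_forall fun a => fun y _ => ?_
      have h1 : HasDerivAt (fun u : ℂ => -(u * (S a : ℂ))) (-(1 * (S a : ℂ))) y :=
        ((hasDerivAt_id y).mul_const _).neg
      have h3 := (h1.cexp).const_mul ((g a : ℂ))
      convert h3 using 1
      show (g a : ℂ) * (-(S a : ℂ) * Complex.exp (-(y * (S a : ℂ)))) = _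
      ring
      rfl
  have hopen : IsOpen {z : ℂ | 0 < z.re} := isOpen_lt continuous_const Complex.continuous_re
  have hΦan : AnalyticOnNhd ℂ Φ {z | 0 < z.re} :=
    DifferentiableOn.analyticOnNhd
      (fun z hz => ((hderiv z hz).differentiableAt).differentiableWithinAt) hopen
  have h1 : AnalyticOnNhd ℝ (fun x : ℝ => Complex.reCLM (Φ (Complex.ofRealCLM x)))
      (Set.Ioi 0) := by
    refine (Complex.reCLM.analyticOnNhd univ).comp ?_ (Set.mapsTo_univ _ _)
    refine ((hΦan.restrictScalars).comp (Complex.ofRealCLM.analyticOnNhd _) ?_)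
    intro x hx
    simpa using (hx : (0:ℝ) < x)
  have key : ContDiffOn ℝ (⊤ : ℕ∞) (fun x : ℝ => Complex.reCLM (Φ (Complex.ofRealCLM x)))
      (Set.Ioi 0) := h1.contDiffOn isOpen_Ioi.uniqueDiffOn
  refine key.congr fun x _ => ?_
  have hx2 : Φ ((x : ℝ) : ℂ) = ((∫ a, g a * Real.exp (-(x * S a)) ∂μ : ℝ) : ℂ) := by
    rw [hΦ]
    calc ∫ a, (g a : ℂ) * Complex.exp (-((x : ℂ) * (S a : ℂ))) ∂μ
        = ∫ a, ((g a * Real.exp (-(x * S a)) : ℝ) : ℂ) ∂μ :=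
          integral_congr_ae (Filter.Eventually.of_forall fun a => by
            push_cast [Complex.ofReal_exp]; ring)
      _ = _ := integral_ofReal
  simp [hx2]


include hg hS hsupp in
lemma completelyMonotoneOn_kernel (hg0 : ∀ᵐ a ∂μ, 0 ≤ g a) :
    CompletelyMonotoneOn (fun y => ∫ a, g a * Real.exp (-(y * S a)) ∂μ) := by
  constructor
  · exact contDiffOn_kernel hg hS hsupp
  · intro k x hx
    rw [iteratedDeriv_kernel hg hS hsupp k hx, ← integral_const_mul]
    refine integral_nonneg_of_ae ?_
    filter_upwards [hg0] with a ha
    by_cases hga : g a = 0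
    · simp [hga]
    · have hSa := hsupp a hga
      have heq : (-1:ℝ)^k * (g a * ((-S a)^k * Real.exp (-(x * S a))))
          = g a * ((S a)^k * Real.exp (-(x * S a))) := by
        rw [show (S a)^k = ((-1:ℝ) * (-S a))^k by ring, mul_pow]; ring
      rw [heq]
      exact mul_nonneg ha (mul_nonneg (pow_nonneg hSa k) (Real.exp_pos _).le)

end Kernel

section Andreief

variable {n : ℕ} (f g : Fin n → ℝ → ℝ)

-- integrability of coordinatewise products over the pi measure
lemma integrable_prod_coords (h : Fin n → ℝ → ℝ)
    (hh : ∀ i, Integrable (h i) (volume : Measure ℝ)) :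
    Integrable (fun t : Fin n → ℝ => ∏ j, h j (t j)) (volume : Measure (Fin n → ℝ)) :=
  Integrable.fintype_prod (f := h) hh

include f g in
lemma step_A (hfg : ∀ i j, Integrable (fun t => f i t * g j t) (volume : Measure ℝ)) :
    (Matrix.of fun i j : Fin n => ∫ t : ℝ, f i t * g j t).det
      = ∫ t : Fin n → ℝ,
          (Matrix.of fun i j : Fin n => f i (t j)).det * ∏ j, g j (t j) := by
  rw [Matrix.det_apply']
  have h1 : ∀ σ : Equiv.Perm (Fin n),
      (∏ i, (Matrix.of fun i j : Fin n => ∫ t : ℝ, f i t * g j t) (σ i) i)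
        = ∫ t : Fin n → ℝ, ∏ i, (f (σ i) (t i) * g i (t i)) := by
    intro σ
    rw [MeasureTheory.integral_fintype_prod_volume_eq_prod (ι := Fin n)
      (f := fun i s => f (σ i) s * g i s)]
    rfl
  calc (∑ σ : Equiv.Perm (Fin n), ((Equiv.Perm.sign σ : ℤ) : ℝ)
          * ∏ i, (Matrix.of fun i j : Fin n => ∫ t : ℝ, f i t * g j t) (σ i) i)
      = ∑ σ : Equiv.Perm (Fin n), ∫ t : Fin n → ℝ,
          ((Equiv.Perm.sign σ : ℤ) : ℝ) * ∏ i, (f (σ i) (t i) * g i (t i)) := by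
        refine Finset.sum_congr rfl fun σ _ => ?_
        rw [h1 σ, integral_const_mul]
    _ = ∫ t : Fin n → ℝ, ∑ σ : Equiv.Perm (Fin n),
          ((Equiv.Perm.sign σ : ℤ) : ℝ) * ∏ i, (f (σ i) (t i) * g i (t i)) := by
        rw [integral_finset_sum]
        intro σ _
        exact (integrable_prod_coords _ (fun i => hfg (σ i) i)).const_mul _
    _ = _ := by
        refine integral_congr_ae (Filter.Eventually.of_forall fun t => ?_)
        beta_reduce
        rw [Matrix.det_apply', Finset.sum_mul]
        refine Finset.sum_congr rfl fun σ _ => ?_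
        rw [mul_assoc, Finset.prod_mul_distrib]
        rfl

include f g in
lemma step_B (hfg : ∀ i j, Integrable (fun t => f i t * g j t) (volume : Measure ℝ)) :
    ∫ t : Fin n → ℝ,
        (Matrix.of fun i j : Fin n => f i (t j)).det
          * (Matrix.of fun i j : Fin n => g i (t j)).det
      = (n ! : ℝ) * ∫ t : Fin n → ℝ,
          (Matrix.of fun i j : Fin n => f i (t j)).det * ∏ j, g j (t j) := by
  -- change of variables claim
  have claim : ∀ p : Equiv.Perm (Fin n),
      ∫ t : Fin n → ℝ, (Matrix.of fun i j : Fin n => f i (t j)).det * ∏ j, g j (t j)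
        = ((Equiv.Perm.sign p : ℤ) : ℝ) * ∫ t : Fin n → ℝ,
            (Matrix.of fun i j : Fin n => f i (t j)).det * ∏ j, g (p.symm j) (t j) := by
    intro p
    have hmp := (MeasureTheory.volume_measurePreserving_piCongrLeft
      (fun _ : Fin n => ℝ) p.symm)
    rw [← hmp.integral_comp'
      (fun t : Fin n → ℝ => (Matrix.of fun i j : Fin n => f i (t j)).det * ∏ j, g j (t j))]
    have hT : ∀ (t : Fin n → ℝ) (j : Fin n),
        (MeasurableEquiv.piCongrLeft (fun _ : Fin n => ℝ) p.symm) t j = t (p j) := by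
      intro t j
      have := Equiv.piCongrLeft_apply_apply (fun _ : Fin n => ℝ) p.symm t (p j)
      simpa [MeasurableEquiv.coe_piCongrLeft] using this
    have hpt : ∀ t : Fin n → ℝ,
        (Matrix.of fun i j : Fin n =>
            f i ((MeasurableEquiv.piCongrLeft (fun _ : Fin n => ℝ) p.symm) t j)).det
          * ∏ j, g j ((MeasurableEquiv.piCongrLeft (fun _ : Fin n => ℝ) p.symm) t j)
        = ((Equiv.Perm.sign p : ℤ) : ℝ)
            * ((Matrix.of fun i j : Fin n => f i (t j)).det * ∏ j, g (p.symm j) (t j)) := by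
      intro t
      have hdet : (Matrix.of fun i j : Fin n => f i (t (p j))).det
          = ((Equiv.Perm.sign p : ℤ) : ℝ) * (Matrix.of fun i j : Fin n => f i (t j)).det := by
        have := Matrix.det_permute' p (Matrix.of fun i j : Fin n => f i (t j))
        rw [← this]
        congr 1
      have hprod : (∏ j, g j (t (p j))) = ∏ j, g (p.symm j) (t j) := by
        have := Equiv.prod_comp p (fun j => g (p.symm j) (t j))
        rw [← this]
        refine Finset.prod_congr rfl fun j _ => by rw [Equiv.symm_apply_apply]
      simp only [hT]
      rw [hdet, hprod]
      ring
    rw [integral_congr_ae (Filter.Eventually.of_forall hpt), integral_const_mul]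
  -- sign squared is one
  have hsign : ∀ p : Equiv.Perm (Fin n),
      ((Equiv.Perm.sign p : ℤ) : ℝ) * ((Equiv.Perm.sign p : ℤ) : ℝ) = 1 := by
    intro p
    rcases Int.units_eq_one_or (Equiv.Perm.sign p) with h | h <;> rw [h] <;> norm_num
  -- integrability of each summand
  have hint : ∀ (u v : Fin n → Fin n), Integrable
      (fun t : Fin n → ℝ => ∏ j, (f (u j) (t j) * g (v j) (t j)))
      (volume : Measure (Fin n → ℝ)) := by
    intro u v
    exact Integrable.fintype_prod (f := fun j s => f (u j) s * g (v j) s)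
      (fun j => hfg (u j) (v j))
  have hintdetf : ∀ v : Fin n → Fin n, Integrable
      (fun t : Fin n → ℝ =>
        (Matrix.of fun i j : Fin n => f i (t j)).det * ∏ j, g (v j) (t j))
      (volume : Measure (Fin n → ℝ)) := by
    intro v
    have : (fun t : Fin n → ℝ =>
        (Matrix.of fun i j : Fin n => f i (t j)).det * ∏ j, g (v j) (t j))
        = fun t => ∑ σ : Equiv.Perm (Fin n),
            ((Equiv.Perm.sign σ : ℤ) : ℝ) * ∏ j, (f (σ j) (t j) * g (v j) (t j)) := by
      funext t
      rw [Matrix.det_apply', Finset.sum_mul]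
      refine Finset.sum_congr rfl fun σ _ => ?_
      rw [mul_assoc, Finset.prod_mul_distrib]
      rfl
    rw [this]
    exact integrable_finset_sum _ (fun σ _ => (hint σ v).const_mul _)
  calc ∫ t : Fin n → ℝ,
        (Matrix.of fun i j : Fin n => f i (t j)).det
          * (Matrix.of fun i j : Fin n => g i (t j)).det
      = ∫ t : Fin n → ℝ, ∑ τ : Equiv.Perm (Fin n),
          ((Equiv.Perm.sign τ : ℤ) : ℝ)
            * ((Matrix.of fun i j : Fin n => f i (t j)).det * ∏ j, g (τ j) (t j)) := by
        refine integral_congr_ae (Filter.Eventually.of_forall fun t => ?_)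
        beta_reduce
        rw [Matrix.det_apply' (Matrix.of fun i j : Fin n => g i (t j)), Finset.mul_sum]
        refine Finset.sum_congr rfl fun τ _ => ?_
        show _ * (_ * ∏ j, (Matrix.of fun i j : Fin n => g i (t j)) (τ j) j) = _
        ring_nf
        rfl
    _ = ∑ τ : Equiv.Perm (Fin n), ((Equiv.Perm.sign τ : ℤ) : ℝ)
          * ∫ t : Fin n → ℝ,
            (Matrix.of fun i j : Fin n => f i (t j)).det * ∏ j, g (τ j) (t j) := by
        rw [integral_finset_sum]
        · exact Finset.sum_congr rfl fun τ _ => integral_const_mul _ _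
        · exact fun τ _ => (hintdetf τ).const_mul _
    _ = ∑ _τ : Equiv.Perm (Fin n), ∫ t : Fin n → ℝ,
          (Matrix.of fun i j : Fin n => f i (t j)).det * ∏ j, g j (t j) := by
        refine Finset.sum_congr rfl fun τ _ => ?_
        have := claim τ.symm
        simp only [Equiv.symm_symm] at this
        rw [this, Equiv.Perm.sign_symm]
    _ = (n ! : ℝ) * ∫ t : Fin n → ℝ,
          (Matrix.of fun i j : Fin n => f i (t j)).det * ∏ j, g j (t j) := by
        rw [Finset.sum_const, nsmul_eq_mul]
        congr 1
        rw [Finset.card_univ, Fintype.card_perm, Fintype.card_fin]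

include f g in
lemma andreief (hfg : ∀ i j, Integrable (fun t => f i t * g j t) (volume : Measure ℝ)) :
    (Matrix.of fun i j : Fin n => ∫ t : ℝ, f i t * g j t).det
      = (n ! : ℝ)⁻¹ * ∫ t : Fin n → ℝ,
          (Matrix.of fun i j : Fin n => f i (t j)).det
            * (Matrix.of fun i j : Fin n => g i (t j)).det := by
  rw [step_B f g hfg, step_A f g hfg, ← mul_assoc, inv_mul_cancel₀ (by
    exact_mod_cast Nat.factorial_ne_zero n), one_mul]

end Andreief

lemma pow_le_one_add_pow {s : ℝ} (hs : 0 ≤ s) {a m : ℕ} (ham : a ≤ m) :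
    s ^ a ≤ 1 + s ^ m := by
  rcases le_or_gt s 1 with h | h
  · have : s ^ a ≤ 1 := pow_le_one₀ hs h
    nlinarith [pow_nonneg hs m]
  · have : s ^ a ≤ s ^ m := pow_le_pow_right₀ h.le ham
    nlinarith

/-- For n ≥ 1 and w a nonnegative integrable function vanishing on (−∞,0)
with ∫_0^∞ t^{2n−2} w(t) dt < ∞, the function x ↦ W_n(𝓛w; x) is completely monotone
on (0,∞). -/
theorem wronskian_laplace_completely_monotone (n : ℕ) (hn : 1 ≤ n) (w : ℝ → ℝ)
    (hpos : ∀ t : ℝ, 0 ≤ w t) (hsupp : ∀ t : ℝ, t < 0 → w t = 0)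
    (hw : Integrable w (volume : Measure ℝ))
    (hmom : IntegrableOn (fun t : ℝ => t ^ (2 * n - 2) * w t) (Set.Ici 0)
      (volume : Measure ℝ)) :
    CompletelyMonotoneOn (fun x : ℝ => wronskR n (laplaceT w) x) := by
  classical
  set m := 2 * n - 2 with hm
  -- measurable pointwise-nonnegative representative supported in (0,∞)
  set w₁ := hw.1.mk w with hw₁
  have hw₁m : Measurable w₁ := hw.1.stronglyMeasurable_mk.measurable
  have hww₁ : w =ᵐ[volume] w₁ := hw.1.ae_eq_mk
  set W : ℝ → ℝ := fun t => if 0 < t then max (w₁ t) 0 else 0 with hWdef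
  have hWmeas : Measurable W := Measurable.ite
    (measurableSet_lt measurable_const measurable_id) (hw₁m.max measurable_const)
    measurable_const
  have hWnn : ∀ t, 0 ≤ W t := by
    intro t
    simp only [hWdef]
    split
    · exact le_max_right _ _
    · exact le_refl 0
  have hWsupp : ∀ t, W t ≠ 0 → 0 < t := by
    intro t h
    by_contra hc
    exact h (by simp only [hWdef]; simp [hc])
  have hWindi : W =ᵐ[volume] (Set.Ioi (0:ℝ)).indicator w := by
    filter_upwards [hww₁] with t ht
    simp only [hWdef]
    by_cases h0 : 0 < t
    · rw [if_pos h0, Set.indicator_of_mem (by exact h0), ← ht, max_eq_left (hpos t)]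
    · rw [if_neg h0, Set.indicator_of_notMem (by simpa using h0)]
  have hWint : Integrable W volume :=
    ((hw.indicator measurableSet_Ioi).congr hWindi.symm)
  have hWmom : Integrable (fun t => t ^ m * W t) volume := by
    have h1 : IntegrableOn (fun t : ℝ => t ^ m * w t) (Set.Ioi 0) volume :=
      hmom.mono_set Set.Ioi_subset_Ici_self
    have h2 : Integrable ((Set.Ioi (0:ℝ)).indicator (fun t => t ^ m * w t)) volume :=
      (integrable_indicator_iff measurableSet_Ioi).2 h1
    refine h2.congr ?_
    filter_upwards [hWindi] with t ht
    by_cases h0 : 0 < t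
    · rw [Set.indicator_of_mem (by exact h0), ht, Set.indicator_of_mem (by exact h0)]
    · rw [Set.indicator_of_notMem (by simpa using h0), ht,
        Set.indicator_of_notMem (by simpa using h0), mul_zero]
  -- master integrability criterion
  have hbnd : Integrable (fun t => (1 + t ^ m) * W t) volume := by
    have : (fun t => (1 + t ^ m) * W t) = fun t => W t + t ^ m * W t := by
      funext t; ring
    rw [this]
    exact hWint.add hWmom
  have hcrit : ∀ h : ℝ → ℝ, AEStronglyMeasurable h volume →
      (∀ t, |h t| ≤ (1 + t ^ m) * W t) → Integrable h volume := by
    intro h hmeas hb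
    exact Integrable.mono' hbnd hmeas (Filter.Eventually.of_forall fun t => by
      rw [Real.norm_eq_abs]; exact hb t)
  -- the key pointwise bound
  have hptbd : ∀ (a b : ℕ), a + b ≤ m → ∀ (C : ℝ → ℝ), (∀ t, 0 < t → |C t| ≤ 1) →
      ∀ t : ℝ, |(-t) ^ a * ((-t) ^ b * (W t * C t))| ≤ (1 + t ^ m) * W t := by
    intro a b hab C hC t
    by_cases hWt : W t = 0
    · rw [hWt]
      simp
    · have ht : 0 < t := hWsupp t hWt
      have : |(-t) ^ a * ((-t) ^ b * (W t * C t))| = t ^ (a + b) * (W t * |C t|) := by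
        rw [abs_mul, abs_mul, abs_mul, abs_pow, abs_pow, abs_neg,
          abs_of_pos ht, abs_of_nonneg (hWnn t), pow_add]
        ring
      rw [this]
      calc t ^ (a+b) * (W t * |C t|) ≤ t ^ (a+b) * (W t * 1) := by
            refine mul_le_mul_of_nonneg_left ?_ (by positivity)
            exact mul_le_mul_of_nonneg_left (hC t ht) (hWnn t)
        _ = t ^ (a+b) * W t := by ring
        _ ≤ (1 + t ^ m) * W t :=
            mul_le_mul_of_nonneg_right (pow_le_one_add_pow ht.le hab) (hWnn t)
  -- the integrability workhorse
  have hintab : ∀ (a b : ℕ), a + b ≤ m → ∀ (C : ℝ → ℝ), Measurable C →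
      (∀ t, 0 < t → |C t| ≤ 1) →
      Integrable (fun s : ℝ => (-s) ^ a * ((-s) ^ b * (W s * C s))) volume := by
    intro a b hab C hCm hC
    refine hcrit _ ?_ (hptbd a b hab C hC)
    exact ((measurable_id.neg.pow_const a).mul ((measurable_id.neg.pow_const b).mul
      (hWmeas.mul hCm))).aestronglyMeasurable
  have habm : ∀ i j : Fin n, (i : ℕ) + (j : ℕ) ≤ m := by
    intro i j
    have h1 := i.isLt
    have h2 := j.isLt
    omega
  -- rewrite the Laplace transform over the full line
  have hL : laplaceT w = fun y : ℝ => ∫ t : ℝ, W t * Real.exp (-(y * t)) := by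
    funext y
    have h1 : ∫ t in Set.Ioi (0:ℝ), w t * Real.exp (-(y*t))
        = ∫ t in Set.Ioi (0:ℝ), W t * Real.exp (-(y*t)) := by
      refine integral_congr_ae ?_
      filter_upwards [ae_restrict_mem measurableSet_Ioi, ae_restrict_of_ae hww₁]
        with t ht h1t
      have : W t = w t := by
        simp only [hWdef]
        rw [if_pos (by exact ht), ← h1t, max_eq_left (hpos t)]
      rw [this]
    have h2 : (fun t : ℝ => W t * Real.exp (-(y*t)))
        = (Set.Ioi (0:ℝ)).indicator (fun t => W t * Real.exp (-(y*t))) := by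
      funext t
      by_cases h0 : t ∈ Set.Ioi (0:ℝ)
      · rw [Set.indicator_of_mem h0]
      · rw [Set.indicator_of_notMem h0]
        have : W t = 0 := by simp only [hWdef]; rw [if_neg (by simpa using h0)]
        rw [this, zero_mul]
    show ∫ t in Set.Ioi (0:ℝ), w t * Real.exp (-(y*t)) = _
    rw [h1]
    conv_rhs => rw [h2]
    rw [integral_indicator measurableSet_Ioi]
  have hWsupp' : ∀ t : ℝ, W t ≠ 0 → 0 ≤ (fun s : ℝ => s) t :=
    fun t ht => (hWsupp t ht).le
  have hIter : ∀ (k : ℕ) {x : ℝ}, 0 < x →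
      iteratedDeriv k (fun y => ∫ t : ℝ, W t * Real.exp (-(y*t))) x
        = ∫ t : ℝ, W t * ((-t) ^ k * Real.exp (-(x*t))) :=
    fun k x hx => iteratedDeriv_kernel (S := fun s : ℝ => s) hWint measurable_id
      hWsupp' k hx
  -- symmetrized objects
  set detf : (Fin n → ℝ) → ℝ :=
    fun t => (Matrix.of fun i j : Fin n => (-(t j)) ^ (i : ℕ)).det with hdetf
  set G : (Fin n → ℝ) → ℝ :=
    fun t => (n ! : ℝ)⁻¹ * (detf t ^ 2 * ∏ j, W (t j)) with hG
  set Sf : (Fin n → ℝ) → ℝ := fun t => ∑ j, t j with hSf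
  set Ψ : ℝ → ℝ := fun y => ∫ t : Fin n → ℝ, G t * Real.exp (-(y * Sf t)) with hΨ
  -- pointwise identity for the Wronskian
  have hEq : Set.EqOn (fun x : ℝ => wronskR n (laplaceT w) x) Ψ (Set.Ioi 0) := by
    intro x hx
    have hx : (0:ℝ) < x := hx
    have hCx : ∀ t : ℝ, 0 < t → |Real.exp (-(x * t))| ≤ 1 := by
      intro t ht
      rw [abs_of_pos (Real.exp_pos _), Real.exp_le_one_iff]
      nlinarith
    have hfgx : ∀ i j : Fin n, Integrable (fun t : ℝ =>
        (fun (i : Fin n) (t : ℝ) => (-t) ^ (i : ℕ)) i t *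
          (fun (j : Fin n) (t : ℝ) => (-t) ^ (j : ℕ) * (W t * Real.exp (-(x*t)))) j t)
        volume := by
      intro i j
      have := hintab (i : ℕ) (j : ℕ) (habm i j) (fun t => Real.exp (-(x*t)))
        ((measurable_id.const_mul x).neg.exp) hCx
      exact this
    have hA := andreief (fun (i : Fin n) (t : ℝ) => (-t) ^ (i : ℕ))
      (fun (j : Fin n) (t : ℝ) => (-t) ^ (j : ℕ) * (W t * Real.exp (-(x*t)))) hfgx
    have hentry : (Matrix.of fun i j : Fin n =>
        iteratedDeriv ((i : ℕ) + (j : ℕ)) (fun y => ∫ t : ℝ, W t * Real.exp (-(y*t))) x)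
        = Matrix.of fun i j : Fin n =>
            ∫ t : ℝ, (-t) ^ (i : ℕ) * ((-t) ^ (j : ℕ) * (W t * Real.exp (-(x*t)))) := by
      ext i j
      rw [Matrix.of_apply, Matrix.of_apply, hIter ((i : ℕ) + (j : ℕ)) hx]
      refine integral_congr_ae (Filter.Eventually.of_forall fun t => ?_)
      beta_reduce
      rw [pow_add]; ring
    have step1 : wronskR n (laplaceT w) x
        = (n ! : ℝ)⁻¹ * ∫ t : Fin n → ℝ, detf t *
            (Matrix.of fun i j : Fin n =>
              (-(t j)) ^ (i : ℕ) * (W (t j) * Real.exp (-(x * t j)))).det := by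
      rw [wronskR, hL, hentry]
      exact hA
    have hg2 : ∀ t : Fin n → ℝ,
        (Matrix.of fun i j : Fin n =>
            (-(t j)) ^ (i : ℕ) * (W (t j) * Real.exp (-(x * t j)))).det
          = (∏ j, (W (t j) * Real.exp (-(x * t j)))) * detf t := by
      intro t
      have hmat : (Matrix.of fun i j : Fin n =>
          (-(t j)) ^ (i : ℕ) * (W (t j) * Real.exp (-(x * t j))))
          = Matrix.of (fun i j : Fin n =>
              (fun j : Fin n => W (t j) * Real.exp (-(x * t j))) j *
                (Matrix.of fun i j : Fin n => (-(t j)) ^ (i : ℕ)) i j) := by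
        ext i j
        simp only [Matrix.of_apply]
        ring
      rw [hmat, Matrix.det_mul_row]
    show wronskR n (laplaceT w) x = Ψ x
    rw [step1, hΨ, ← integral_const_mul]
    refine integral_congr_ae (Filter.Eventually.of_forall fun t => ?_)
    beta_reduce
    rw [hg2 t, Finset.prod_mul_distrib, ← Real.exp_sum]
    have hsum : ∑ j, -(x * t j) = -(x * Sf t) := by
      rw [hSf, Finset.sum_neg_distrib, Finset.mul_sum]
    rw [hsum, hG]
    ring
  -- integrability of G
  have hGint : Integrable G (volume : Measure (Fin n → ℝ)) := by
    have hexp : G = fun t => ∑ σ : Equiv.Perm (Fin n), ∑ τ : Equiv.Perm (Fin n),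
        ((n ! : ℝ)⁻¹ * (((Equiv.Perm.sign σ : ℤ) : ℝ) * ((Equiv.Perm.sign τ : ℤ) : ℝ)))
          * ∏ j, ((-(t j)) ^ ((σ j : ℕ)) * ((-(t j)) ^ ((τ j : ℕ)) * (W (t j) * 1))) := by
      funext t
      have h1 : detf t = ∑ σ : Equiv.Perm (Fin n),
          ((Equiv.Perm.sign σ : ℤ) : ℝ) * ∏ i, (-(t i)) ^ ((σ i : ℕ)) := by
        rw [hdetf]
        beta_reduce
        rw [Matrix.det_apply']
        rfl
      rw [hG]
      beta_reduce
      rw [sq, h1, Finset.sum_mul_sum, Finset.sum_mul, Finset.mul_sum]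
      refine Finset.sum_congr rfl fun σ _ => ?_
      rw [Finset.sum_mul, Finset.mul_sum]
      refine Finset.sum_congr rfl fun τ _ => ?_
      beta_reduce
      rw [Finset.prod_mul_distrib]
      conv_rhs => rw [Finset.prod_mul_distrib, Finset.prod_mul_distrib]
      rw [Finset.prod_const_one]
      ring
    rw [hexp]
    refine integrable_finset_sum _ fun σ _ => integrable_finset_sum _ fun τ _ => ?_
    refine Integrable.const_mul ?_ _
    exact Integrable.fintype_prod
      (f := fun (j : Fin n) (s : ℝ) => (-s) ^ ((σ j : ℕ)) * ((-s) ^ ((τ j : ℕ)) * (W s * 1)))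
      (fun j => hintab _ _ (by
        have h1 := (σ j).isLt
        have h2 := (τ j).isLt
        omega) (fun _ => 1) measurable_const (fun t _ => by simp))
  have hSm : Measurable Sf := by
    rw [hSf]
    exact Finset.measurable_sum _ (fun j _ => measurable_pi_apply j)
  have hGsupp : ∀ t, G t ≠ 0 → 0 ≤ Sf t := by
    intro t h
    have h3 : (∏ j, W (t j)) ≠ 0 := by
      intro hz
      apply h
      rw [hG]
      beta_reduce
      rw [hz, mul_zero, mul_zero]
    refine Finset.sum_nonneg fun j _ => ?_
    have := Finset.prod_ne_zero_iff.1 h3 j (Finset.mem_univ j)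
    exact (hWsupp _ this).le
  have hG0 : ∀ᵐ t : Fin n → ℝ ∂volume, 0 ≤ G t := by
    refine Filter.Eventually.of_forall fun t => ?_
    rw [hG]
    beta_reduce
    refine mul_nonneg (by positivity) (mul_nonneg (sq_nonneg _) ?_)
    exact Finset.prod_nonneg fun j _ => hWnn _
  have hCM : CompletelyMonotoneOn Ψ := by
    rw [hΨ]
    exact completelyMonotoneOn_kernel hGint hSm hGsupp hG0
  constructor
  · exact hCM.1.congr fun x hx => hEq hx
  · intro k x hx
    rw [Set.EqOn.iteratedDeriv_of_isOpen hEq isOpen_Ioi k hx]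
    exact hCM.2 k x hx
end

section
/- Let α, β > −1 and let w_{α,β}(t) = (1−t)^α (1+t)^β for t ∈ [−1, 1] and w_{α,β}(t) = 0 otherwise. Then: (a) ν_2(w_{α,β}; t) = 0 whenever |t| > 2; (b) ν_2(w_{α,β}; −t) = ν_2(w_{β,α}; t) for all t; and (c) for 0 < t ≤ 2, ν_2(w_{α,β}; t) = 2^{−(2α+1)} (2−t)^{2α+3} ∫_{−1}^{1} (2t + ((2−t)²/4)(1−u²))^β · u² (1−u²)^α du. -/
open MeasureTheory

/-- The second correlation function ν₂(f; t) = ∫_ℝ (t − 2s)² f(s) f(t−s) ds. -/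
noncomputable def corr2 (f : ℝ → ℝ) (t : ℝ) : ℝ :=
  ∫ s : ℝ, (t - 2 * s) ^ 2 * f s * f (t - s)
/-- The Jacobi weight w_{α,β}(t) = (1−t)^α (1+t)^β on [−1,1], zero elsewhere. -/
noncomputable def jacobiW (α β : ℝ) (t : ℝ) : ℝ :=
  if t ∈ Set.Icc (-1 : ℝ) 1 then (1 - t) ^ α * (1 + t) ^ β else 0

/-!
Reflecting `s ↦ -s` swaps the two exponents of the Jacobi weight, which gives (b). Since `w`
vanishes off `[-1, 1]`, the integrand of `ν₂(w; t)` lives on `[-1, 1] ∩ [t - 1, t + 1]`; for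
`|t| ≥ 2` this is at most the point `s = t / 2`, where the factor `(t - 2s)²` vanishes. For
`0 < t < 2` the substitution `s = t/2 + ((2 - t)/2) u` maps `[-1, 1]` onto this interval and
factors the weights: `(1 - s)(1 - (t - s)) = ((2 - t)²/4)(1 - u²)` and
`(1 + s)(1 + (t - s)) = 2t + ((2 - t)²/4)(1 - u²)`.
-/

open Set

section corr2

variable {f : ℝ → ℝ}

theorem corr2_comp_neg (f : ℝ → ℝ) (t : ℝ) : corr2 (fun x => f (-x)) t = corr2 f (-t) := by
  rw [corr2, corr2, ← integral_neg_eq_self]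
  congr 1 with s
  rw [neg_neg, show -(t - -s) = -t - s by ring]
  ring

theorem corr2_eq_zero_of_two_le_abs (hf : ∀ x ∉ Icc (-1 : ℝ) 1, f x = 0) {t : ℝ}
    (ht : 2 ≤ |t|) : corr2 f t = 0 := by
  have hzero : ∀ s, (t - 2 * s) ^ 2 * f s * f (t - s) = 0 := by
    intro s
    by_cases hs : s ∈ Icc (-1 : ℝ) 1
    · by_cases hts : t - s ∈ Icc (-1 : ℝ) 1
      · have hts2 : t = 2 * s := by
          rcases le_abs'.mp ht with h | h <;> linarith [hs.1, hs.2, hts.1, hts.2]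
        simp [hts2]
      · simp [hf _ hts]
    · simp [hf _ hs]
  simp only [corr2, hzero, integral_zero]

theorem corr2_eq_integral_scaled (f : ℝ → ℝ) (t : ℝ) {c : ℝ} (hc : 0 < c) :
    corr2 f t = 4 * c ^ 3 * ∫ u, u ^ 2 * f (t / 2 + c * u) * f (t / 2 - c * u) := by
  calc corr2 f t
      = ∫ v, (t - 2 * (t / 2 + v)) ^ 2 * f (t / 2 + v) * f (t - (t / 2 + v)) :=
        (integral_add_left_eq_self _ (t / 2)).symm
    _ = c * ∫ u, (t - 2 * (t / 2 + c * u)) ^ 2 * f (t / 2 + c * u) * f (t - (t / 2 + c * u)) := by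
        rw [Measure.integral_comp_mul_left (fun v => (t - 2 * (t / 2 + v)) ^ 2 * f (t / 2 + v) *
          f (t - (t / 2 + v))), abs_of_pos (inv_pos.2 hc), smul_eq_mul, ← mul_assoc,
          mul_inv_cancel₀ hc.ne', one_mul]
    _ = 4 * c ^ 3 * ∫ u, u ^ 2 * f (t / 2 + c * u) * f (t / 2 - c * u) := by
        rw [← integral_const_mul, ← integral_const_mul]
        congr 1 with u
        rw [show t - (t / 2 + c * u) = t / 2 - c * u by ring]
        ring

theorem corr2_eq_intervalIntegral (hf : ∀ x ∉ Icc (-1 : ℝ) 1, f x = 0) {t : ℝ} (ht : t < 2) :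
    corr2 f t = 4 * ((2 - t) / 2) ^ 3 * ∫ u in (-1 : ℝ)..1,
      u ^ 2 * f (t / 2 + (2 - t) / 2 * u) * f (t / 2 - (2 - t) / 2 * u) := by
  have hc : 0 < (2 - t) / 2 := by linarith
  rw [corr2_eq_integral_scaled f t hc, intervalIntegral.integral_of_le (by norm_num),
    ← integral_Icc_eq_integral_Ioc, setIntegral_eq_integral_of_forall_compl_eq_zero]
  intro u hu
  rcases not_and_or.mp hu with hu | hu <;> rw [not_le] at hu
  · rw [hf (t / 2 - (2 - t) / 2 * u) fun h => by nlinarith [h.2], mul_zero]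
  · rw [hf (t / 2 + (2 - t) / 2 * u) fun h => by nlinarith [h.2], mul_zero, zero_mul]

end corr2

section jacobiW

variable (α β : ℝ)

theorem jacobiW_neg (x : ℝ) : jacobiW α β (-x) = jacobiW β α x := by
  have hmem : -x ∈ Icc (-1 : ℝ) 1 ↔ x ∈ Icc (-1 : ℝ) 1 := by
    simp only [mem_Icc]
    constructor <;> rintro ⟨h₁, h₂⟩ <;> constructor <;> linarith
  simp only [jacobiW, hmem, sub_neg_eq_add, ← sub_eq_add_neg, mul_comm]

theorem jacobiW_of_notMem {x : ℝ} (hx : x ∉ Icc (-1 : ℝ) 1) : jacobiW α β x = 0 :=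
  if_neg hx

theorem jacobiW_mul_jacobiW_symm {t u : ℝ} (ht₀ : 0 ≤ t) (ht₂ : t ≤ 2) (hu : u ∈ Icc (-1 : ℝ) 1) :
    jacobiW α β (t / 2 + (2 - t) / 2 * u) * jacobiW α β (t / 2 - (2 - t) / 2 * u) =
      ((2 - t) ^ 2 / 4) ^ α * (1 - u ^ 2) ^ α * (2 * t + (2 - t) ^ 2 / 4 * (1 - u ^ 2)) ^ β := by
  obtain ⟨hu₁, hu₂⟩ := hu
  set s := t / 2 + (2 - t) / 2 * u with hs_def
  set s' := t / 2 - (2 - t) / 2 * u with hs'_def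
  have h₁ : 0 ≤ (2 - t) * (1 - u) := mul_nonneg (by linarith) (by linarith)
  have h₂ : 0 ≤ (2 - t) * (1 + u) := mul_nonneg (by linarith) (by linarith)
  have hs : s ∈ Icc (-1 : ℝ) 1 := ⟨by linarith, by linarith⟩
  have hs' : s' ∈ Icc (-1 : ℝ) 1 := ⟨by linarith, by linarith⟩
  calc jacobiW α β s * jacobiW α β s'
      = ((1 - s) * (1 - s')) ^ α * ((1 + s) * (1 + s')) ^ β := by
        rw [jacobiW, jacobiW, if_pos hs, if_pos hs', Real.mul_rpow (by linarith) (by linarith),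
          Real.mul_rpow (by linarith) (by linarith)]
        ring
    _ = _ := by
        rw [show (1 - s) * (1 - s') = (2 - t) ^ 2 / 4 * (1 - u ^ 2) by ring,
          show (1 + s) * (1 + s') = 2 * t + (2 - t) ^ 2 / 4 * (1 - u ^ 2) by ring,
          Real.mul_rpow (by positivity) (by nlinarith)]

end jacobiW

theorem four_mul_half_pow_three_mul_rpow {x : ℝ} (hx : 0 < x) (α : ℝ) :
    4 * (x / 2) ^ 3 * (x ^ 2 / 4) ^ α = (2 : ℝ) ^ (-(2 * α + 1)) * x ^ (2 * α + 3) := by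
  have h2 : (2 : ℝ) ^ (-(2 * α + 1)) * 2 ^ (2 * α + 3) = 4 := by
    rw [← Real.rpow_add two_pos]
    norm_num
  rw [show x ^ 2 / 4 = (x / 2) ^ 2 by ring, ← Real.rpow_natCast (x / 2) 2,
    ← Real.rpow_mul (by positivity), ← Real.rpow_natCast (x / 2) 3, mul_assoc,
    ← Real.rpow_add (by positivity), Real.div_rpow hx.le zero_le_two, ← h2]
  push_cast
  have : (0 : ℝ) < 2 ^ (2 * α + 3) := by positivity
  field_simp
  ring_nf

theorem corr2_jacobi_general (α β : ℝ) (hα : -1 < α) :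
    (∀ t : ℝ, 2 < |t| → corr2 (jacobiW α β) t = 0) ∧
    (∀ t : ℝ, corr2 (jacobiW α β) (-t) = corr2 (jacobiW β α) t) ∧
    (∀ t : ℝ, 0 < t → t ≤ 2 →
      corr2 (jacobiW α β) t =
        (2 : ℝ) ^ (-(2 * α + 1)) * (2 - t) ^ (2 * α + 3) *
          ∫ u in (-1 : ℝ)..1,
            (2 * t + ((2 - t) ^ 2 / 4) * (1 - u ^ 2)) ^ β * (u ^ 2 * (1 - u ^ 2) ^ α)) := by
  have hsupp : ∀ x ∉ Icc (-1 : ℝ) 1, jacobiW α β x = 0 := fun _ => jacobiW_of_notMem α β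
  refine ⟨fun t ht => corr2_eq_zero_of_two_le_abs hsupp ht.le, fun t => ?_, fun t ht₀ ht₂ => ?_⟩
  · rw [← corr2_comp_neg]
    simp only [jacobiW_neg]
  rcases ht₂.lt_or_eq with ht₂ | rfl
  · calc corr2 (jacobiW α β) t
        = 4 * ((2 - t) / 2) ^ 3 * ∫ u in (-1 : ℝ)..1, ((2 - t) ^ 2 / 4) ^ α *
            ((2 * t + (2 - t) ^ 2 / 4 * (1 - u ^ 2)) ^ β * (u ^ 2 * (1 - u ^ 2) ^ α)) := by
          rw [corr2_eq_intervalIntegral hsupp ht₂]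
          congr 1
          refine intervalIntegral.integral_congr fun u hu => ?_
          rw [uIcc_of_le (by norm_num)] at hu
          simp only [mul_assoc, jacobiW_mul_jacobiW_symm α β ht₀.le ht₂.le hu]
          ring
      _ = _ := by
          rw [intervalIntegral.integral_const_mul, ← mul_assoc,
            four_mul_half_pow_three_mul_rpow (by linarith)]
  · rw [corr2_eq_zero_of_two_le_abs hsupp (by norm_num), sub_self,
      Real.zero_rpow (by linarith), mul_zero, zero_mul]

/-- For α, β > −1:
(a) ν₂(w_{α,β}; t) = 0 for |t| > 2;
(b) ν₂(w_{α,β}; −t) = ν₂(w_{β,α}; t) for all t;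
(c) for 0 < t ≤ 2, ν₂(w_{α,β}; t) = 2^{−(2α+1)} (2−t)^{2α+3}
    ∫_{−1}^1 (2t + ((2−t)²/4)(1−u²))^β u² (1−u²)^α du. -/
theorem corr2_jacobi (α β : ℝ) (hα : -1 < α) (hβ : -1 < β) :
    (∀ t : ℝ, 2 < |t| → corr2 (jacobiW α β) t = 0) ∧
    (∀ t : ℝ, corr2 (jacobiW α β) (-t) = corr2 (jacobiW β α) t) ∧
    (∀ t : ℝ, 0 < t → t ≤ 2 →
      corr2 (jacobiW α β) t =
        (2 : ℝ) ^ (-(2 * α + 1)) * (2 - t) ^ (2 * α + 3) *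
          ∫ u in (-1 : ℝ)..1,
            (2 * t + ((2 - t) ^ 2 / 4) * (1 - u ^ 2)) ^ β * (u ^ 2 * (1 - u ^ 2) ^ α)) :=
  corr2_jacobi_general α β hα
end
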